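/- arXiv:1712.03098 — 3 statements merged into one kernel-verified Lean document; each statement's English description precedes it below -/
import Mathlib

section
/- Let {S_ℓ}_{ℓ≥1} be a positive nondecreasing sequence, {b_ℓ}_{ℓ≥1} and {k_ℓ}_{ℓ≥1} nonnegative sequences, and p > 1 a constant. Define a_ℓ := ∏_{s=1}^{ℓ-1} 1/(1+b_s) for ℓ ≥ 2 (and a_1 := 1). If S_{ℓ+1} - S_ℓ ≤ b_ℓ S_ℓ + k_ℓ S_ℓ^p for all ℓ ≥ 1, and S_1^{1-p} + (1-p) ∑_{s=1}^{ℓ-1} k_s a_{s+1}^{1-p} > 0 for all ℓ ≥ 2, then S_ℓ ≤ (1/a_ℓ) · (S_1^{1-p} + (1-p) ∑_{s=1}^{ℓ-1} k_s a_{s+1}^{1-p})^{1/(1-p)} for all ℓ ≥ 2. -/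
/-!
Put `q = 1 - p < 0` and `x_ℓ = a_ℓ S_ℓ`. Multiplying the recursion by `a_{ℓ+1}` absorbs the linear
term: `x_{ℓ+1} ≤ x_ℓ + k_ℓ a_{ℓ+1} S_ℓ^p`. Since `t ↦ t^q` is convex and decreasing, its tangent line
at `x_ℓ` gives `x_{ℓ+1}^q ≥ x_ℓ^q + q k_ℓ a_{ℓ+1} a_ℓ^{-p} ≥ x_ℓ^q + q k_ℓ a_{ℓ+1}^q`, using
`a_{ℓ+1} ≤ a_ℓ`. Summing these increments bounds `x_ℓ^q` below by the positive quantity of the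
hypothesis, and raising to the negative power `1/q` reverses the inequality.
-/

open Finset

theorem one_add_mul_sub_one_le_rpow_of_nonpos {t q : ℝ} (ht : 0 < t) (hq : q ≤ 0) :
    1 + q * (t - 1) ≤ t ^ q := by
  have hlog : q * (t - 1) ≤ q * Real.log t :=
    mul_le_mul_of_nonpos_left (Real.log_le_sub_one_of_pos ht) hq
  calc 1 + q * (t - 1) ≤ Real.log t * q + 1 := by linarith
    _ ≤ Real.exp (Real.log t * q) := Real.add_one_le_exp _
    _ = t ^ q := (Real.rpow_def_of_pos ht q).symm

theorem rpow_add_mul_rpow_sub_one_mul_sub_le_of_nonpos {x y q : ℝ} (hx : 0 < x) (hy : 0 < y)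
    (hq : q ≤ 0) : x ^ q + q * x ^ (q - 1) * (y - x) ≤ y ^ q := by
  have h := one_add_mul_sub_one_le_rpow_of_nonpos (div_pos hy hx) hq
  rw [Real.div_rpow hy.le hx.le, le_div_iff₀ (Real.rpow_pos_of_pos hx q)] at h
  calc x ^ q + q * x ^ (q - 1) * (y - x) = (1 + q * (y / x - 1)) * x ^ q := by
        rw [Real.rpow_sub_one hx.ne']; field_simp
    _ ≤ y ^ q := h

/-- One step of the argument, with `A, A'` the weights and `S, S'` the values at `ℓ, ℓ + 1`. -/
theorem rpow_one_sub_add_le_of_le_add {p A A' S S' k : ℝ} (hp : 1 ≤ p) (hA' : 0 < A')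
    (hA'A : A' ≤ A) (hS : 0 < S) (hS' : 0 < S') (hk : 0 ≤ k)
    (h : A' * S' ≤ A * S + k * A' * S ^ p) :
    (A * S) ^ (1 - p) + (1 - p) * (k * A' ^ (1 - p)) ≤ (A' * S') ^ (1 - p) := by
  have hA : 0 < A := hA'.trans_le hA'A
  have hx : 0 < A * S := mul_pos hA hS
  have hq : 1 - p ≤ 0 := by linarith
  have hweight : (A * S) ^ (-p) * (A' * S ^ p) ≤ A' ^ (1 - p) :=
    calc (A * S) ^ (-p) * (A' * S ^ p) = A ^ (-p) * A' * (S ^ (-p) * S ^ p) := by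
          rw [Real.mul_rpow hA.le hS.le]; ring
      _ = A ^ (-p) * A' := by
          rw [← Real.rpow_add hS, neg_add_cancel, Real.rpow_zero, mul_one]
      _ ≤ A' ^ (-p) * A' :=
          mul_le_mul_of_nonneg_right (Real.rpow_le_rpow_of_nonpos hA' hA'A (by linarith)) hA'.le
      _ = A' ^ (1 - p) := by
          rw [← Real.rpow_add_one hA'.ne']; ring_nf
  have htangent := rpow_add_mul_rpow_sub_one_mul_sub_le_of_nonpos hx (mul_pos hA' hS') hq
  rw [show (1 - p) - 1 = -p by ring] at htangent
  have hqk : (1 - p) * k ≤ 0 := mul_nonpos_of_nonpos_of_nonneg hq hk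
  have hslope : (1 - p) * (A * S) ^ (-p) ≤ 0 :=
    mul_nonpos_of_nonpos_of_nonneg hq (Real.rpow_nonneg hx.le _)
  calc (A * S) ^ (1 - p) + (1 - p) * (k * A' ^ (1 - p))
      ≤ (A * S) ^ (1 - p) + (1 - p) * (A * S) ^ (-p) * (k * A' * S ^ p) := by
        linarith [mul_le_mul_of_nonpos_left hweight hqk]
    _ ≤ (A * S) ^ (1 - p) + (1 - p) * (A * S) ^ (-p) * (A' * S' - A * S) := by
        linarith [mul_le_mul_of_nonpos_left (show A' * S' - A * S ≤ k * A' * S ^ p by linarith)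
          hslope]
    _ ≤ (A' * S') ^ (1 - p) := htangent

theorem add_sum_Icc_le_of_add_le_succ {u c : ℕ → ℝ} (h : ∀ n ≥ 1, u n + c n ≤ u (n + 1)) :
    ∀ ℓ ≥ 1, u 1 + ∑ s ∈ Icc 1 (ℓ - 1), c s ≤ u ℓ := by
  intro ℓ hℓ
  induction ℓ, hℓ using Nat.le_induction with
  | base => simp
  | succ n hn ih =>
    rw [Nat.add_sub_cancel, ← insert_Icc_sub_one_right_eq_Icc hn, sum_insert (by simp; omega)]
    linarith [h n hn]

noncomputable def gronwallWeight (b : ℕ → ℝ) (ℓ : ℕ) : ℝ :=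
  ∏ s ∈ Icc 1 (ℓ - 1), (1 + b s)⁻¹

namespace gronwallWeight

variable {b : ℕ → ℝ}

theorem one : gronwallWeight b 1 = 1 := by
  simp [gronwallWeight]

theorem pos (hb : ∀ ℓ ≥ 1, 0 ≤ b ℓ) (ℓ : ℕ) : 0 < gronwallWeight b ℓ :=
  prod_pos fun s hs => inv_pos.2 (by linarith [hb s (mem_Icc.1 hs).1])

theorem succ {ℓ : ℕ} (hℓ : 1 ≤ ℓ) :
    gronwallWeight b (ℓ + 1) = gronwallWeight b ℓ * (1 + b ℓ)⁻¹ := by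
  rw [gronwallWeight, gronwallWeight, Nat.add_sub_cancel, ← insert_Icc_sub_one_right_eq_Icc hℓ,
    prod_insert (by simp; omega), mul_comm]

theorem succ_mul_one_add {ℓ : ℕ} (hℓ : 1 ≤ ℓ) (hbℓ : 0 ≤ b ℓ) :
    gronwallWeight b (ℓ + 1) * (1 + b ℓ) = gronwallWeight b ℓ := by
  rw [succ hℓ, inv_mul_cancel_right₀ (by linarith)]

theorem succ_le {ℓ : ℕ} (hℓ : 1 ≤ ℓ) (hb : ∀ ℓ ≥ 1, 0 ≤ b ℓ) :
    gronwallWeight b (ℓ + 1) ≤ gronwallWeight b ℓ := by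
  rw [succ hℓ]
  exact mul_le_of_le_one_right (pos hb ℓ).le (inv_le_one_of_one_le₀ (by linarith [hb ℓ hℓ]))

end gronwallWeight

theorem rpow_one_sub_add_sum_le_rpow_gronwallWeight_mul {S b k : ℕ → ℝ} {p : ℝ} (hp : 1 ≤ p)
    (hS : ∀ ℓ ≥ 1, 0 < S ℓ) (hb : ∀ ℓ ≥ 1, 0 ≤ b ℓ) (hk : ∀ ℓ ≥ 1, 0 ≤ k ℓ)
    (hrec : ∀ ℓ ≥ 1, S (ℓ + 1) - S ℓ ≤ b ℓ * S ℓ + k ℓ * S ℓ ^ p) :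
    ∀ ℓ ≥ 1, S 1 ^ (1 - p) + (1 - p) * ∑ s ∈ Icc 1 (ℓ - 1), k s * gronwallWeight b (s + 1) ^ (1 - p)
      ≤ (gronwallWeight b ℓ * S ℓ) ^ (1 - p) := by
  have step : ∀ n ≥ 1, (gronwallWeight b n * S n) ^ (1 - p)
      + (1 - p) * (k n * gronwallWeight b (n + 1) ^ (1 - p))
      ≤ (gronwallWeight b (n + 1) * S (n + 1)) ^ (1 - p) := by
    intro n hn
    refine rpow_one_sub_add_le_of_le_add hp (gronwallWeight.pos hb _)
      (gronwallWeight.succ_le hn hb) (hS n hn) (hS (n + 1) (by omega)) (hk n hn) ?_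
    calc gronwallWeight b (n + 1) * S (n + 1)
        ≤ gronwallWeight b (n + 1) * ((1 + b n) * S n + k n * S n ^ p) := by
          gcongr
          · exact (gronwallWeight.pos hb _).le
          · linarith [hrec n hn]
      _ = gronwallWeight b n * S n + k n * gronwallWeight b (n + 1) * S n ^ p := by
          rw [← gronwallWeight.succ_mul_one_add hn (hb n hn)]; ring
  intro ℓ hℓ
  simpa [mul_sum, gronwallWeight.one] using add_sum_Icc_le_of_add_le_succ step ℓ hℓ

theorem nonlinear_discrete_gronwall_general (S b k : ℕ → ℝ) (p : ℝ) (hp : 1 < p)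
    (hSpos : ∀ ℓ ≥ 1, 0 < S ℓ)
    (hb : ∀ ℓ ≥ 1, 0 ≤ b ℓ) (hk : ∀ ℓ ≥ 1, 0 ≤ k ℓ)
    (a : ℕ → ℝ) (ha : ∀ ℓ ≥ 2, a ℓ = ∏ s ∈ Finset.Icc 1 (ℓ - 1), (1 + b s)⁻¹)
    (hrec : ∀ ℓ ≥ 1, S (ℓ + 1) - S ℓ ≤ b ℓ * S ℓ + k ℓ * S ℓ ^ p)
    (hpos : ∀ ℓ ≥ 2,
      0 < S 1 ^ (1 - p) + (1 - p) * ∑ s ∈ Finset.Icc 1 (ℓ - 1), k s * a (s + 1) ^ (1 - p)) :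
    ∀ ℓ ≥ 2, S ℓ ≤ (1 / a ℓ) *
      (S 1 ^ (1 - p) + (1 - p) * ∑ s ∈ Finset.Icc 1 (ℓ - 1), k s * a (s + 1) ^ (1 - p))
        ^ (1 / (1 - p)) := by
  intro ℓ hℓ
  have ha_eq : ∀ n ≥ 2, a n = gronwallWeight b n := ha
  have hsum : ∑ s ∈ Icc 1 (ℓ - 1), k s * a (s + 1) ^ (1 - p)
      = ∑ s ∈ Icc 1 (ℓ - 1), k s * gronwallWeight b (s + 1) ^ (1 - p) :=
    sum_congr rfl fun s hs => by rw [ha_eq (s + 1) (by linarith [(mem_Icc.1 hs).1])]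
  have hbound := rpow_one_sub_add_sum_le_rpow_gronwallWeight_mul hp.le hSpos hb hk hrec ℓ
    (by omega)
  have hw := gronwallWeight.pos hb ℓ
  have hpos_ℓ := hpos ℓ hℓ
  rw [hsum] at hpos_ℓ ⊢
  rw [ha_eq ℓ hℓ, one_div (1 - p)]
  calc S ℓ = 1 / gronwallWeight b ℓ * (gronwallWeight b ℓ * S ℓ) := by field_simp
    _ ≤ _ := by
      gcongr
      exact (Real.le_rpow_inv_iff_of_neg (mul_pos hw (hSpos ℓ (by omega))) hpos_ℓ
        (by linarith)).2 hbound

/-- A nonlinear discrete Gronwall-type inequality (Lemma 2.4). -/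
theorem nonlinear_discrete_gronwall (S b k : ℕ → ℝ) (p : ℝ) (hp : 1 < p)
    (hSpos : ∀ ℓ ≥ 1, 0 < S ℓ) (hSmono : ∀ ℓ ≥ 1, S ℓ ≤ S (ℓ + 1))
    (hb : ∀ ℓ ≥ 1, 0 ≤ b ℓ) (hk : ∀ ℓ ≥ 1, 0 ≤ k ℓ)
    (a : ℕ → ℝ) (ha : ∀ ℓ ≥ 2, a ℓ = ∏ s ∈ Finset.Icc 1 (ℓ - 1), (1 + b s)⁻¹)
    (hrec : ∀ ℓ ≥ 1, S (ℓ + 1) - S ℓ ≤ b ℓ * S ℓ + k ℓ * S ℓ ^ p)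
    (hpos : ∀ ℓ ≥ 2,
      0 < S 1 ^ (1 - p) + (1 - p) * ∑ s ∈ Finset.Icc 1 (ℓ - 1), k s * a (s + 1) ^ (1 - p)) :
    ∀ ℓ ≥ 2, S ℓ ≤ (1 / a ℓ) *
      (S 1 ^ (1 - p) + (1 - p) * ∑ s ∈ Finset.Icc 1 (ℓ - 1), k s * a (s + 1) ^ (1 - p))
        ^ (1 / (1 - p)) :=
  nonlinear_discrete_gronwall_general S b k p hp hSpos hb hk a ha hrec hpos
end

section
/- Let a : V × V → ℝ be a symmetric bilinear form on a real vector space V, F : ℝ → ℝ continuously differentiable, and ε, k > 0. For a sequence u^0, u^1, …, u^M in V ∩ L^2(Ω) satisfying, for every test function v, ((u^{m+1} - u^m)/k, v) + a((u^{m+1} + u^m)/2, v) + (1/ε^2)((F(u^{m+1}) - F(u^m))/(u^{m+1} - u^m), v) = 0, the choice v = (u^{m+1} - u^m)/k yields the discrete energy law: (1/2) a(u^{m+1}, u^{m+1}) + (1/ε^2) ∫ F(u^{m+1}) ≤ (1/2) a(u^m, u^m) + (1/ε^2) ∫ F(u^m) for every m, i.e., the discrete energy J^h_ε(u^m) :=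 (1/2) a(u^m, u^m) + ε^{-2} ∫ F(u^m) is nonincreasing in m. -/
/-!
Testing the scheme with the increment `u^{m+1} - u^m` turns each of its three terms into an
energy difference or a sign: the time-difference term becomes `‖u^{m+1} - u^m‖² / k ≥ 0`,
symmetry of `a` makes the Crank–Nicolson average telescope to
`(a(u^{m+1}, u^{m+1}) - a(u^m, u^m)) / 2`, and the secant slope of `F` times the increment is
exactly `F(u^{m+1}) - F(u^m)`. The energy therefore drops by the nonnegative first term.
-/

open MeasureTheory

theorem LinearMap.apply_add_sub_of_symm {R E : Type*} [CommRing R] [AddCommGroup E] [Module R E]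
    (a : E →ₗ[R] E →ₗ[R] R) (hsymm : ∀ v w, a v w = a w v) (x y : E) :
    a (x + y) (x - y) = a x x - a y y := by
  simp only [map_add, map_sub, LinearMap.add_apply, hsymm y x]
  ring

theorem LinearMap.apply_midpoint_sub_of_symm {E : Type*} [AddCommGroup E] [Module ℝ E]
    (a : E →ₗ[ℝ] E →ₗ[ℝ] ℝ) (hsymm : ∀ v w, a v w = a w v) (x y : E) :
    a ((2 : ℝ)⁻¹ • (x + y)) (x - y) = (1 / 2) * (a x x - a y y) := by
  rw [map_smul, LinearMap.smul_apply, smul_eq_mul, a.apply_add_sub_of_symm hsymm, one_div]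

theorem secant_mul_sub {K : Type*} [Field K] (F : K → K) (b c : K) :
    (F b - F c) / (b - c) * (b - c) = F b - F c :=
  div_mul_cancel_of_imp fun h => by rw [sub_eq_zero.1 h, sub_self]

theorem integral_secant_mul_sub {Ω : Type*} [MeasurableSpace Ω] {μ : Measure Ω}
    (F : ℝ → ℝ) {f g : Ω → ℝ} (hf : Integrable (fun x => F (f x)) μ)
    (hg : Integrable (fun x => F (g x)) μ) :
    ∫ x, (F (f x) - F (g x)) / (f x - g x) * (f x - g x) ∂μ
      = ∫ x, F (f x) ∂μ - ∫ x, F (g x) ∂μ := by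
  simp only [secant_mul_sub]
  exact integral_sub hf hg

theorem integral_div_mul_self_nonneg {Ω : Type*} [MeasurableSpace Ω] {μ : Measure Ω}
    (f : Ω → ℝ) {k : ℝ} (hk : 0 ≤ k) : 0 ≤ ∫ x, f x / k * f x ∂μ :=
  integral_nonneg fun x => by
    rw [div_mul_eq_mul_div]
    exact div_nonneg (mul_self_nonneg _) hk

theorem discrete_energy_stability_general {Ω : Type*} [MeasureSpace Ω]
    (a : (Ω → ℝ) →ₗ[ℝ] (Ω → ℝ) →ₗ[ℝ] ℝ) (hsymm : ∀ v w : Ω → ℝ, a v w = a w v)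
    (F : ℝ → ℝ) (ε k : ℝ) (hk : 0 < k)
    (M : ℕ) (u : ℕ → Ω → ℝ)
    (hFInt : ∀ m ≤ M, Integrable (fun x => F (u m x)))
    (hscheme : ∀ m < M, ∀ v : Ω → ℝ,
      (∫ x, (u (m + 1) x - u m x) / k * v x)
        + a (fun x => (u (m + 1) x + u m x) / 2) v
        + (1 / ε^2) * ∫ x, (F (u (m + 1) x) - F (u m x)) / (u (m + 1) x - u m x) * v x
        = 0) :
    ∀ m < M,
      (1/2) * a (u (m + 1)) (u (m + 1)) + (1 / ε^2) * ∫ x, F (u (m + 1) x)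
        ≤ (1/2) * a (u m) (u m) + (1 / ε^2) * ∫ x, F (u m x) := by
  intro m hm
  have htested := hscheme m hm (u (m + 1) - u m)
  have hmidpoint : (fun x => (u (m + 1) x + u m x) / 2) = (2 : ℝ)⁻¹ • (u (m + 1) + u m) := by
    funext x
    simp only [Pi.smul_apply, Pi.add_apply, smul_eq_mul]
    ring
  simp only [Pi.sub_apply] at htested
  rw [hmidpoint, a.apply_midpoint_sub_of_symm hsymm,
    integral_secant_mul_sub F (hFInt _ hm) (hFInt _ hm.le)] at htested
  have hdissipation := integral_div_mul_self_nonneg (μ := volume) (u (m + 1) - u m) hk.le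
  simp only [Pi.sub_apply] at hdissipation
  linarith

/-- Unconditional energy stability of the modified Crank–Nicolson scheme:
testing with the discrete time derivative yields a nonincreasing discrete energy. -/
theorem discrete_energy_stability {Ω : Type*} [MeasureSpace Ω]
    (a : (Ω → ℝ) →ₗ[ℝ] (Ω → ℝ) →ₗ[ℝ] ℝ) (hsymm : ∀ v w : Ω → ℝ, a v w = a w v)
    (F : ℝ → ℝ) (hF : ContDiff ℝ 1 F) (ε k : ℝ) (hε : 0 < ε) (hk : 0 < k)
    (M : ℕ) (u : ℕ → Ω → ℝ) (hL2 : ∀ m ≤ M, MemLp (u m) 2 volume)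
    (hFInt : ∀ m ≤ M, Integrable (fun x => F (u m x)))
    (hscheme : ∀ m < M, ∀ v : Ω → ℝ,
      (∫ x, (u (m + 1) x - u m x) / k * v x)
        + a (fun x => (u (m + 1) x + u m x) / 2) v
        + (1 / ε^2) * ∫ x, (F (u (m + 1) x) - F (u m x)) / (u (m + 1) x - u m x) * v x
        = 0) :
    ∀ m < M,
      (1/2) * a (u (m + 1)) (u (m + 1)) + (1 / ε^2) * ∫ x, F (u (m + 1) x)
        ≤ (1/2) * a (u m) (u m) + (1 / ε^2) * ∫ x, F (u m x) :=
  discrete_energy_stability_general a hsymm F ε k hk M u hFInt hscheme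
end

section
/- Let f(u) = u^3 - u. For real numbers A, B with |A| ≤ C₀ and |B| ≤ C₀, and for any real x, y, define l := (1/4)(x+y)(A+B)^2 + (1/2)[x A^2 + y B^2] - (x+y)/2. Then l · ((x+y)/2) ≥ (3B^2 - 1)·((x+y)/2)^2 - (3/2)(C₀+1)|A - B| · ((x+y)/2)^2 - |A - B|·C₀·(x^2+y^2). -/
/-!
Write `m = (x + y) / 2` and `d = A - B`. Expanding `A = B + d` shows that `l * m` equals the main
term `(3 B² - 1) m²` plus `d / 2` times the coupling `m² (A + 3 B) + m x (A + B)`, whose size is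
at most `C₀ (5 m² + x²)` by the bounds on `A`, `B` and `2 |m x| ≤ m² + x²`. It remains to absorb
`m² ≤ (x² + y²) / 2`.
-/

section LinearTermEstimate

variable {𝕜 : Type*} [Field 𝕜] [LinearOrder 𝕜] [IsStrictOrderedRing 𝕜]

theorem linear_term_mul_midpoint_eq (A B x y : 𝕜) :
    ((1/4) * (x + y) * (A + B)^2 + (1/2) * (x * A^2 + y * B^2) - (x + y)/2) * ((x + y)/2)
      = (3*B^2 - 1) * ((x + y)/2)^2
        + (A - B) / 2 * (((x + y)/2)^2 * (A + 3*B) + (x + y)/2 * x * (A + B)) := by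
  ring

theorem abs_coupling_le {C A B : 𝕜} (hA : |A| ≤ C) (hB : |B| ≤ C) (m x : 𝕜) :
    |m^2 * (A + 3*B) + m * x * (A + B)| ≤ C * (5 * m^2 + x^2) := by
  have hC : 0 ≤ C := (abs_nonneg A).trans hA
  have hA3B : |A + 3*B| ≤ 4 * C := by
    have h3B : |3*B| = 3 * |B| := by rw [abs_mul, abs_of_pos three_pos]
    linarith [abs_add_le A (3*B)]
  have hAB : |A + B| ≤ 2 * C := by linarith [abs_add_le A B]
  have hmx : 2 * |m * x| ≤ m^2 + x^2 := by
    simpa only [abs_mul, mul_assoc, sq_abs] using two_mul_le_add_sq |m| |x|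
  calc |m^2 * (A + 3*B) + m * x * (A + B)|
      ≤ m^2 * |A + 3*B| + |m * x| * |A + B| :=
        (abs_add_le _ _).trans_eq (by rw [abs_mul, abs_mul, abs_sq])
    _ ≤ m^2 * (4 * C) + |m * x| * (2 * C) := by gcongr
    _ ≤ C * (5 * m^2 + x^2) := by nlinarith

theorem sq_midpoint_le (x y : 𝕜) : ((x + y)/2)^2 ≤ (x^2 + y^2)/2 := by
  nlinarith [add_sq_le (a := x) (b := y)]

end LinearTermEstimate

/-- Estimate for the linear-in-ξ term in the error analysis. -/
theorem linear_term_estimate (C₀ A B x y : ℝ) (hA : |A| ≤ C₀) (hB : |B| ≤ C₀) :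
    ((1/4) * (x + y) * (A + B)^2 + (1/2) * (x * A^2 + y * B^2) - (x + y)/2) * ((x + y)/2)
      ≥ (3*B^2 - 1) * ((x + y)/2)^2 - (3/2) * (C₀ + 1) * |A - B| * ((x + y)/2)^2
        - |A - B| * C₀ * (x^2 + y^2) := by
  rw [linear_term_mul_midpoint_eq, ge_iff_le]
  set m := (x + y)/2
  set K := m^2 * (A + 3*B) + m * x * (A + B)
  have hC : 0 ≤ C₀ := (abs_nonneg A).trans hA
  have hcoupling : C₀ * (5 * m^2 + x^2) ≤ 3 * (C₀ + 1) * m^2 + 2 * C₀ * (x^2 + y^2) := by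
    have hm : m^2 ≤ (x^2 + y^2)/2 := sq_midpoint_le x y
    nlinarith [mul_le_mul_of_nonneg_left hm hC, sq_nonneg m, mul_nonneg hC (sq_nonneg y)]
  have hdcoupling : |A - B| / 2 * |K| ≤ |A - B| / 2 * (3 * (C₀ + 1) * m^2 + 2 * C₀ * (x^2 + y^2)) := by
    gcongr
    exact (abs_coupling_le hA hB m x).trans hcoupling
  have hlow : -(|A - B| / 2 * |K|) ≤ (A - B) / 2 * K := by
    simpa only [abs_mul, abs_div, abs_two] using neg_abs_le ((A - B) / 2 * K)
  linarith
end
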